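/- Let G = (V, E; w) be a graph with strictly positive edge weights. If the matching game Γ_G admits a PMAS, then G contains no induced 4-cycle C_4, i.e., there do not exist distinct vertices 1, 2, 3, 4 whose induced subgraph has edge set exactly {12, 23, 34, 14}. -/

import Mathlib

open Finset

/-- `M` is a matching of the induced subgraph `G[S]`, given as a finite set of
(ordered representatives of) edges with endpoints in `S`, pairwise vertex-disjoint. -/
def IsMatchingIn {V : Type*} (G : SimpleGraph V) (S : Finset V)
    (M : Finset (V × V)) : Prop :=
  (∀ p ∈ M, G.Adj p.1 p.2 ∧ p.1 ∈ S ∧ p.2 ∈ S) ∧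
  (∀ p ∈ M, ∀ q ∈ M, p ≠ q →
    p.1 ≠ q.1 ∧ p.1 ≠ q.2 ∧ p.2 ≠ q.1 ∧ p.2 ≠ q.2)

/-- `r` is the maximum total weight of a matching in the induced subgraph `G[S]`. -/
def IsMaxMatchingWeight {V : Type*} (G : SimpleGraph V)
    (w : V → V → ℝ) (S : Finset V) (r : ℝ) : Prop :=
  (∃ M : Finset (V × V), IsMatchingIn G S M ∧ ∑ p ∈ M, w p.1 p.2 = r) ∧
  (∀ M : Finset (V × V), IsMatchingIn G S M → ∑ p ∈ M, w p.1 p.2 ≤ r)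

/-- A population monotonic allocation scheme (PMAS): `x S i` is the payoff of player `i`
in coalition `S`.  Efficiency holds for every nonempty coalition, and every player's
payoff is monotone under coalition inclusion. -/
def IsPMAS {N : Type*} [DecidableEq N] (γ : Finset N → ℝ)
    (x : Finset N → N → ℝ) : Prop :=
  (∀ S : Finset N, S.Nonempty → ∑ i ∈ S, x S i = γ S) ∧
  (∀ S T : Finset N, S ⊆ T → ∀ i ∈ S, x S i ≤ x T i)

/-!
In an induced 4-cycle `a b c d` some vertex, say `a`, has `w a d ≤ w a b`. The coalition
`{d, a, b}` is worth only `w a b` (its two edges share `a`), which the pair `{a, b}` already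
secures, so a PMAS pays `d` nothing there, hence nothing in `{a, d}`: there `a` collects
`w a d`. In the coalition `{a, d, c}`, again worth at most `max (w a d) (w d c)`, monotonicity
then forces the payoffs to add up to at least `w a d + w d c`, which is too much.
-/

section Matching

variable {V : Type*} {G : SimpleGraph V} {w : V → V → ℝ} {S : Finset V} {M : Finset (V × V)}

theorem IsMatchingIn.two_mul_card_le (hM : IsMatchingIn G S M) : 2 * #M ≤ #S := by
  classical
  obtain ⟨hmem, hdisj⟩ := hM
  have hfst : Set.InjOn Prod.fst M := fun p hp q hq h =>
    by_contra fun hpq => (hdisj p hp q hq hpq).1 h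
  have hsnd : Set.InjOn Prod.snd M := fun p hp q hq h =>
    by_contra fun hpq => (hdisj p hp q hq hpq).2.2.2 h
  have hdisjoint : Disjoint (M.image Prod.fst) (M.image Prod.snd) := by
    simp only [disjoint_left, mem_image]
    rintro _ ⟨p, hp, rfl⟩ ⟨q, hq, hqp⟩
    by_cases hpq : p = q
    · subst hpq
      exact (hmem p hp).1.ne hqp.symm
    · exact (hdisj p hp q hq hpq).2.1 hqp.symm
  calc 2 * #M = #(M.image Prod.fst ∪ M.image Prod.snd) := by
        rw [card_union_of_disjoint hdisjoint, card_image_of_injOn hfst,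
          card_image_of_injOn hsnd, two_mul]
    _ ≤ #S := card_le_card <| union_subset
        (fun v hv => by obtain ⟨p, hp, rfl⟩ := mem_image.1 hv; exact (hmem p hp).2.1)
        (fun v hv => by obtain ⟨p, hp, rfl⟩ := mem_image.1 hv; exact (hmem p hp).2.2)

variable [DecidableEq V] {a b c : V}

theorem IsMaxMatchingWeight.weight_le {r : ℝ} (hab : G.Adj a b)
    (h : IsMaxMatchingWeight G w {a, b} r) : w a b ≤ r := by
  simpa using h.2 {(a, b)} ⟨by simp [hab], by simp⟩

theorem weight_le_max_of_not_adj (hsym : ∀ u v, w u v = w v u) (hac : ¬G.Adj a c)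
    {u v : V} (huv : G.Adj u v) (hu : u ∈ ({a, b, c} : Finset V))
    (hv : v ∈ ({a, b, c} : Finset V)) : w u v ≤ max (w a b) (w b c) := by
  simp only [mem_insert, mem_singleton] at hu hv
  rcases hu with rfl | rfl | rfl <;> rcases hv with rfl | rfl | rfl <;>
    simp_all [G.adj_comm]

theorem IsMaxMatchingWeight.le_max_of_not_adj (hsym : ∀ u v, w u v = w v u)
    (hab : 0 ≤ w a b) (hac : ¬G.Adj a c) {r : ℝ}
    (h : IsMaxMatchingWeight G w {a, b, c} r) : r ≤ max (w a b) (w b c) := by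
  obtain ⟨⟨M, hM, rfl⟩, -⟩ := h
  have hcard : #M ≤ 1 := by
    have := hM.two_mul_card_le
    have : #({a, b, c} : Finset V) ≤ 3 := card_le_three
    omega
  rcases Nat.le_one_iff_eq_zero_or_eq_one.1 hcard with hM0 | hM1
  · simp [card_eq_zero.1 hM0, hab]
  · obtain ⟨p, rfl⟩ := card_eq_one.1 hM1
    obtain ⟨hp, hp1, hp2⟩ := hM.1 p (mem_singleton_self p)
    simpa using weight_le_max_of_not_adj hsym hac hp hp1 hp2

end Matching

section PMAS

variable {N : Type*} [DecidableEq N] {γ : Finset N → ℝ} {x : Finset N → N → ℝ}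

theorem IsPMAS.add_le_of_insert (hx : IsPMAS γ x) {S : Finset N} {i : N} (hi : i ∉ S)
    (hS : S.Nonempty) : γ S + x (insert i S) i ≤ γ (insert i S) := by
  rw [← hx.1 S hS, ← hx.1 _ (insert_nonempty i S), sum_insert hi, add_comm]
  gcongr with j hj
  exact hx.2 S _ (subset_insert i S) j hj

theorem IsPMAS.add_eq_of_ne (hx : IsPMAS γ x) {i j : N} (hij : i ≠ j) :
    x {i, j} i + x {i, j} j = γ {i, j} := by
  rw [← hx.1 _ (insert_nonempty i {j}), sum_pair hij]

end PMAS

section FourCycle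

variable {V : Type*}

def IsInducedFourCycle (G : SimpleGraph V) (a b c d : V) : Prop :=
  a ≠ b ∧ a ≠ c ∧ a ≠ d ∧ b ≠ c ∧ b ≠ d ∧ c ≠ d ∧
    G.Adj a b ∧ G.Adj b c ∧ G.Adj c d ∧ G.Adj a d ∧ ¬G.Adj a c ∧ ¬G.Adj b d

theorem IsInducedFourCycle.rotate {G : SimpleGraph V} {a b c d : V}
    (h : IsInducedFourCycle G a b c d) : IsInducedFourCycle G b c d a := by
  obtain ⟨hab, hac, had, hbc, hbd, hcd, gab, gbc, gcd, gad, nac, nbd⟩ := h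
  exact ⟨hbc, hbd, hab.symm, hcd, hac.symm, had.symm, gbc, gcd, gad.symm, gab.symm, nbd,
    fun h => nac h.symm⟩

theorem IsPMAS.weight_lt_of_isInducedFourCycle [DecidableEq V] {G : SimpleGraph V}
    {w : V → V → ℝ} (hsym : ∀ u v, w u v = w v u) (hpos : ∀ u v, G.Adj u v → 0 < w u v)
    {γ : Finset V → ℝ} (hγ : ∀ S, IsMaxMatchingWeight G w S (γ S))
    {x : Finset V → V → ℝ} (hx : IsPMAS γ x) {a b c d : V}
    (hC : IsInducedFourCycle G a b c d) : w a b < w a d := by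
  obtain ⟨-, hac, had, -, hbd, -, gab, -, gcd, gad, nac, nbd⟩ := hC
  by_contra! hle
  have hd_zero : x {d, a, b} d ≤ 0 := by
    have hT : γ {d, a, b} ≤ max (w d a) (w a b) :=
      (hγ _).le_max_of_not_adj hsym (hpos d a gad.symm).le (fun h => nbd h.symm)
    rw [hsym d a, max_eq_right hle] at hT
    have := hx.add_le_of_insert (i := d) (by simp [had.symm, hbd.symm]) (insert_nonempty a {b})
    have := (hγ {a, b}).weight_le gab
    linarith
  have ha_pay : w a d ≤ x {a, d} a := by
    have := hx.2 {a, d} {d, a, b} (by simp [insert_subset_iff]) d (by simp)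
    have := hx.add_eq_of_ne had
    have := (hγ {a, d}).weight_le gad
    linarith
  have hU_low : w d c + w a d ≤ γ {a, d, c} :=
    calc w d c + w a d ≤ γ {d, c} + x {a, d, c} a :=
          add_le_add ((hγ _).weight_le gcd.symm)
            (ha_pay.trans (hx.2 _ _ (by simp [insert_subset_iff]) a (by simp)))
      _ ≤ γ {a, d, c} := hx.add_le_of_insert (by simp [had, hac]) (insert_nonempty d {c})
  have hU_high : γ {a, d, c} ≤ max (w a d) (w d c) :=
    (hγ _).le_max_of_not_adj hsym (hpos a d gad).le nac
  have hmax : max (w a d) (w d c) < w d c + w a d :=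
    max_lt (lt_add_of_pos_left _ (hpos d c gcd.symm)) (lt_add_of_pos_right _ (hpos a d gad))
  exact (hU_low.trans hU_high).not_gt hmax

end FourCycle

theorem matchingGame_C4_free_general {V : Type*} [DecidableEq V]
    (G : SimpleGraph V) (w : V → V → ℝ)
    (hsym : ∀ a b : V, w a b = w b a)
    (hpos : ∀ a b : V, G.Adj a b → 0 < w a b)
    (γ : Finset V → ℝ)
    (hγ : ∀ S : Finset V, IsMaxMatchingWeight G w S (γ S))
    (hpmas : ∃ x : Finset V → V → ℝ, IsPMAS γ x) :
    ¬ ∃ v1 v2 v3 v4 : V,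
      v1 ≠ v2 ∧ v1 ≠ v3 ∧ v1 ≠ v4 ∧ v2 ≠ v3 ∧ v2 ≠ v4 ∧ v3 ≠ v4 ∧
      G.Adj v1 v2 ∧ G.Adj v2 v3 ∧ G.Adj v3 v4 ∧ G.Adj v1 v4 ∧
      ¬ G.Adj v1 v3 ∧ ¬ G.Adj v2 v4 := by
  rintro ⟨v1, v2, v3, v4, hC⟩
  obtain ⟨x, hx⟩ := hpmas
  have hC : IsInducedFourCycle G v1 v2 v3 v4 := hC
  have h1 := hx.weight_lt_of_isInducedFourCycle hsym hpos hγ hC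
  have h2 := hx.weight_lt_of_isInducedFourCycle hsym hpos hγ hC.rotate
  have h3 := hx.weight_lt_of_isInducedFourCycle hsym hpos hγ hC.rotate.rotate
  have h4 := hx.weight_lt_of_isInducedFourCycle hsym hpos hγ hC.rotate.rotate.rotate
  rw [hsym v2 v1] at h2
  rw [hsym v3 v2] at h3
  rw [hsym v4 v3, hsym v4 v1] at h4
  linarith

/-- C₄-freeness (Lemma 3.6). -/
theorem matchingGame_C4_free {V : Type*} [Fintype V] [DecidableEq V]
    (G : SimpleGraph V) (w : V → V → ℝ)
    (hsym : ∀ a b : V, w a b = w b a)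
    (hpos : ∀ a b : V, G.Adj a b → 0 < w a b)
    (γ : Finset V → ℝ)
    (hγ : ∀ S : Finset V, IsMaxMatchingWeight G w S (γ S))
    (hpmas : ∃ x : Finset V → V → ℝ, IsPMAS γ x) :
    ¬ ∃ v1 v2 v3 v4 : V,
      v1 ≠ v2 ∧ v1 ≠ v3 ∧ v1 ≠ v4 ∧ v2 ≠ v3 ∧ v2 ≠ v4 ∧ v3 ≠ v4 ∧
      G.Adj v1 v2 ∧ G.Adj v2 v3 ∧ G.Adj v3 v4 ∧ G.Adj v1 v4 ∧
      ¬ G.Adj v1 v3 ∧ ¬ G.Adj v2 v4 :=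
  matchingGame_C4_free_general G w hsym hpos γ hγ hpmas
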